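/- arXiv:2112.07544 — 5 statements merged into one kernel-verified Lean document; each statement's English description precedes it below -/
import Mathlib

section
/- Let A be a finite set, p a probability distribution on A, q : A → ℝ a vector, and M > 0 a constant such that max_{a,a'∈A} (q(a) - q(a')) ≤ M. Then (Σ_{a∈A} p(a)·exp(-q(a))²) / (Σ_{a∈A} p(a)·exp(-q(a)))² - 1 ≤ (exp(2M)/M²)·Σ_{a∈A} p(a)·q(a)². -/
/-!
By Jensen, `∑ p e^{-q} ≥ e^{-μ}` where `μ = ∑ p q`, so the ratio is at most `∑ p e^{2(μ - q)}`.
The exponents `d = 2(μ - q)` are centred and bounded by `2M`, and comparing Taylor tails term by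
term gives `e^d - 1 - d ≤ (d / 2M)² e^{2M}`. Averaging leaves `e^{2M}/M²` times the variance of
`q`, which is at most its second moment.
-/

open Finset Real Nat

namespace Real

theorem exp_sub_one_sub_eq_tsum (x : ℝ) :
    exp x - 1 - x = ∑' n : ℕ, x ^ (n + 2) / (n + 2)! := by
  rw [exp_eq_exp_ℝ, NormedSpace.exp_eq_tsum_div]
  beta_reduce
  rw [← (summable_pow_div_factorial x).sum_add_tsum_nat_add 2]
  simp only [sum_range_succ, range_one, sum_singleton, pow_zero, pow_one, factorial_zero,
    factorial_one, cast_one, div_one]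
  ring

theorem exp_sub_one_sub_le_of_abs_le {s c : ℝ} (hc : 0 < c) (hs : |s| ≤ c) :
    exp s - 1 - s ≤ s ^ 2 / c ^ 2 * (exp c - 1 - c) := by
  have hsummable (x : ℝ) : Summable fun n : ℕ => x ^ (n + 2) / (n + 2)! :=
    (summable_nat_add_iff 2).mpr (summable_pow_div_factorial x)
  rw [exp_sub_one_sub_eq_tsum, exp_sub_one_sub_eq_tsum, ← (hsummable c).tsum_mul_left]
  refine (hsummable s).tsum_le_tsum (fun n => ?_) ((hsummable c).mul_left _)
  have hpow : s ^ (n + 2) ≤ s ^ 2 * c ^ n := calc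
    s ^ (n + 2) ≤ |s| ^ (n + 2) := by rw [← abs_pow]; exact le_abs_self _
    _ = s ^ 2 * |s| ^ n := by rw [pow_add, sq_abs, mul_comm]
    _ ≤ s ^ 2 * c ^ n := by gcongr
  calc s ^ (n + 2) / (n + 2)! ≤ s ^ 2 * c ^ n / (n + 2)! := by gcongr
    _ = s ^ 2 / c ^ 2 * (c ^ (n + 2) / (n + 2)!) := by field_simp; ring

end Real

section WeightedMean

variable {ι : Type*} [Fintype ι] {p : ι → ℝ}

theorem sum_mul_weightedMean_sub (hp1 : ∑ i, p i = 1) (f : ι → ℝ) :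
    ∑ i, p i * (∑ j, p j * f j - f i) = 0 := by
  simp only [mul_sub, sum_sub_distrib, ← sum_mul, hp1, one_mul, sub_self]

theorem sum_mul_weightedMean_sub_sq (hp1 : ∑ i, p i = 1) (f : ι → ℝ) :
    ∑ i, p i * (∑ j, p j * f j - f i) ^ 2 = ∑ i, p i * f i ^ 2 - (∑ j, p j * f j) ^ 2 := by
  set μ := ∑ j, p j * f j
  have hexpand (i : ι) :
      p i * (μ - f i) ^ 2 = μ ^ 2 * p i - 2 * μ * (p i * f i) + p i * f i ^ 2 := by ring
  simp only [hexpand, sum_add_distrib, sum_sub_distrib, ← mul_sum, hp1]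
  ring

theorem abs_weightedMean_sub_le (hp0 : ∀ i, 0 ≤ p i) (hp1 : ∑ i, p i = 1) {f : ι → ℝ} {M : ℝ}
    (hf : ∀ i j, f i - f j ≤ M) (i : ι) : |∑ j, p j * f j - f i| ≤ M := by
  have hle {g : ι → ℝ} (hg : ∀ j, g j ≤ M) : ∑ j, p j * g j ≤ M := calc
    ∑ j, p j * g j ≤ ∑ j, p j * M := by gcongr with j; exacts [hp0 j, hg j]
    _ = M := by rw [← sum_mul, hp1, one_mul]
  have hmean (c : ℝ) : ∑ j, p j * c = c := by rw [← sum_mul, hp1, one_mul]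
  rw [abs_sub_le_iff]
  constructor
  · simpa only [mul_sub, sum_sub_distrib, hmean] using hle fun j => hf j i
  · simpa only [mul_sub, sum_sub_distrib, hmean] using hle fun j => hf i j

theorem exp_weightedMean_le (hp0 : ∀ i, 0 ≤ p i) (hp1 : ∑ i, p i = 1) (f : ι → ℝ) :
    exp (∑ i, p i * f i) ≤ ∑ i, p i * exp (f i) := by
  simpa only [smul_eq_mul] using
    convexOn_exp.map_sum_le (t := univ) (fun i _ => hp0 i) hp1 (fun i _ => Set.mem_univ (f i))

theorem sum_mul_exp_sq_div_sq_le (hp0 : ∀ i, 0 ≤ p i) (hp1 : ∑ i, p i = 1) (q : ι → ℝ) :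
    (∑ i, p i * exp (-q i) ^ 2) / (∑ i, p i * exp (-q i)) ^ 2
      ≤ ∑ i, p i * exp (2 * (∑ j, p j * q j - q i)) := by
  set μ := ∑ j, p j * q j
  have hjensen : exp (-μ) ≤ ∑ i, p i * exp (-q i) := by
    simpa only [mul_neg, sum_neg_distrib] using exp_weightedMean_le hp0 hp1 (fun i => -q i)
  calc (∑ i, p i * exp (-q i) ^ 2) / (∑ i, p i * exp (-q i)) ^ 2
      ≤ (∑ i, p i * exp (-q i) ^ 2) / exp (-μ) ^ 2 := by
        gcongr
        exact sum_nonneg fun i _ => mul_nonneg (hp0 i) (sq_nonneg _)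
    _ = ∑ i, p i * exp (2 * (μ - q i)) := by
        rw [sum_div]
        refine sum_congr rfl fun i _ => ?_
        rw [mul_div_assoc, ← div_pow, ← exp_sub, ← exp_nat_mul]
        push_cast
        ring_nf

theorem sum_mul_exp_sub_one_le (hp0 : ∀ i, 0 ≤ p i) (hp1 : ∑ i, p i = 1) {d : ι → ℝ}
    (hd : ∑ i, p i * d i = 0) {c : ℝ} (hc : 0 < c) (hdc : ∀ i, |d i| ≤ c) :
    ∑ i, p i * exp (d i) - 1 ≤ exp c / c ^ 2 * ∑ i, p i * d i ^ 2 := by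
  have hexcess : ∑ i, p i * exp (d i) - 1 = ∑ i, p i * (exp (d i) - 1 - d i) := by
    simp only [mul_sub, sum_sub_distrib, mul_one, hp1, hd, sub_zero]
  rw [hexcess, mul_sum]
  refine sum_le_sum fun i _ => ?_
  calc p i * (exp (d i) - 1 - d i) ≤ p i * (d i ^ 2 / c ^ 2 * (exp c - 1 - c)) :=
        mul_le_mul_of_nonneg_left (exp_sub_one_sub_le_of_abs_le hc (hdc i)) (hp0 i)
    _ ≤ p i * (d i ^ 2 / c ^ 2 * exp c) := by gcongr; exacts [hp0 i, by linarith]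
    _ = exp c / c ^ 2 * (p i * d i ^ 2) := by ring

end WeightedMean

theorem stmt0_general {A : Type*} [Fintype A]
    (p : A → ℝ) (hp0 : ∀ a, 0 ≤ p a) (hp1 : ∑ a, p a = 1)
    (q : A → ℝ) (M : ℝ) (hM : 0 < M)
    (hq : ∀ a a', q a - q a' ≤ M) :
    (∑ a, p a * Real.exp (-q a) ^ 2) / (∑ a, p a * Real.exp (-q a)) ^ 2 - 1
      ≤ Real.exp (2 * M) / M ^ 2 * ∑ a, p a * q a ^ 2 := by
  have hmean := sum_mul_weightedMean_sub hp1 q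
  have hvariance := sum_mul_weightedMean_sub_sq hp1 q
  have hratio := sum_mul_exp_sq_div_sq_le hp0 hp1 q
  have hspread := abs_weightedMean_sub_le hp0 hp1 hq
  set μ := ∑ a, p a * q a
  have hcentred : ∑ a, p a * (2 * (μ - q a)) = 0 := by
    simp only [mul_left_comm _ (2 : ℝ), ← mul_sum, hmean, mul_zero]
  have hbounded (a : A) : |2 * (μ - q a)| ≤ 2 * M := by
    rw [abs_mul, abs_two]
    exact mul_le_mul_of_nonneg_left (hspread a) zero_le_two
  calc _ ≤ ∑ a, p a * exp (2 * (μ - q a)) - 1 := by gcongr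
    _ ≤ exp (2 * M) / (2 * M) ^ 2 * ∑ a, p a * (2 * (μ - q a)) ^ 2 :=
        sum_mul_exp_sub_one_le hp0 hp1 hcentred (by positivity) hbounded
    _ = exp (2 * M) / M ^ 2 * (∑ a, p a * q a ^ 2 - μ ^ 2) := by
        simp only [mul_pow, mul_left_comm _ ((2 : ℝ) ^ 2), ← mul_sum, hvariance]
        field_simp
    _ ≤ _ := by
        gcongr
        exact sub_le_self _ (sq_nonneg μ)

theorem stmt0 {A : Type*} [Fintype A] [Nonempty A]
    (p : A → ℝ) (hp0 : ∀ a, 0 ≤ p a) (hp1 : ∑ a, p a = 1)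
    (q : A → ℝ) (M : ℝ) (hM : 0 < M)
    (hq : ∀ a a', q a - q a' ≤ M) :
    (∑ a, p a * Real.exp (-q a) ^ 2) / (∑ a, p a * Real.exp (-q a)) ^ 2 - 1
      ≤ Real.exp (2 * M) / M ^ 2 * ∑ a, p a * q a ^ 2 :=
  stmt0_general p hp0 hp1 q M hM hq
end

section
/- Let X be a bounded random variable taking values in [0, M] with M > 0. Then E[exp(-X)²]/(E[exp(-X)])² - 1 ≤ ((exp(2M) - 2M - 1)/M²)·Var(X), and in particular E[exp(-X)²]/(E[exp(-X)])² - 1 ≤ (exp(2M)/M²)·E[X²]. -/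
open Real Finset Nat

lemma my_exp_tsum (x : ℝ) : Real.exp x = ∑' n : ℕ, x ^ n / n ! := by
  rw [Real.exp_eq_exp_ℝ, NormedSpace.exp_eq_tsum_div]

lemma my_exp_sub_shift (x : ℝ) :
    Real.exp x - 1 - x = ∑' n : ℕ, x ^ (n + 2) / (n + 2)! := by
  have hs := Real.summable_pow_div_factorial x
  have h1 : Summable (fun n : ℕ => x ^ (n + 1) / (n + 1)!) :=
    (summable_nat_add_iff 1).2 hs
  rw [my_exp_tsum, Summable.tsum_eq_zero_add hs, Summable.tsum_eq_zero_add h1]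
  push_cast
  simp [Nat.factorial]

set_option maxHeartbeats 1000000 in
lemma my_phi_mono {t c : ℝ} (ht : 0 ≤ t) (htc : t ≤ c) :
    c ^ 2 * (Real.exp t - 1 - t) ≤ t ^ 2 * (Real.exp c - 1 - c) := by
  have hst : Summable (fun n : ℕ => t ^ (n + 2) / (n + 2)!) :=
    (summable_nat_add_iff 2).2 (Real.summable_pow_div_factorial t)
  have hsc : Summable (fun n : ℕ => c ^ (n + 2) / (n + 2)!) :=
    (summable_nat_add_iff 2).2 (Real.summable_pow_div_factorial c)
  rw [my_exp_sub_shift, my_exp_sub_shift, ← tsum_mul_left, ← tsum_mul_left]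
  refine Summable.tsum_le_tsum (fun n => ?_) (hst.mul_left _) (hsc.mul_left _)
  rw [mul_div_assoc', mul_div_assoc']
  refine div_le_div_of_nonneg_right ?_ (by positivity)
  calc c ^ 2 * t ^ (n + 2) = (t * c) ^ 2 * t ^ n := by ring
    _ ≤ (t * c) ^ 2 * c ^ n := by
        exact mul_le_mul_of_nonneg_left (pow_le_pow_left₀ ht htc n) (by positivity)
    _ = t ^ 2 * c ^ (n + 2) := by ring

lemma my_key {t c : ℝ} (hc : 0 < c) (ht : t ≤ c) :
    Real.exp t ≤ 1 + t + (Real.exp c - c - 1) / c ^ 2 * t ^ 2 := by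
  have hphi : c ^ 2 / 2 ≤ Real.exp c - c - 1 := by
    have := Real.quadratic_le_exp_of_nonneg hc.le
    linarith
  have hc2 : (0:ℝ) < c ^ 2 := by positivity
  rcases le_or_gt t 0 with h0 | h0
  · -- exp t ≤ 1 + t + t^2/2 for t ≤ 0
    have hq : Real.exp t ≤ 1 + t + t ^ 2 / 2 := by
      have h1 : 1 + (-t) + (-t) ^ 2 / 2 ≤ Real.exp (-t) :=
        Real.quadratic_le_exp_of_nonneg (by linarith)
      have h2 : Real.exp t * Real.exp (-t) = 1 := by
        rw [← Real.exp_add]; simp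
      nlinarith [Real.exp_pos t, Real.exp_pos (-t), sq_nonneg (t ^ 2)]
    have : t ^ 2 / 2 ≤ (Real.exp c - c - 1) / c ^ 2 * t ^ 2 := by
      rw [div_mul_eq_mul_div, le_div_iff₀ hc2]
      nlinarith [sq_nonneg t]
    linarith
  · have h := my_phi_mono h0.le ht
    have h2 : t ^ 2 * (Real.exp c - 1 - c)
        = c ^ 2 * ((Real.exp c - c - 1) / c ^ 2 * t ^ 2) := by
      field_simp; ring
    rw [h2] at h
    have h3 := (mul_le_mul_iff_right₀ hc2).1 h
    linarith

theorem stmt1 {Ω : Type*} [Fintype Ω]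
    (w : Ω → ℝ) (hw0 : ∀ ω, 0 ≤ w ω) (hw1 : ∑ ω, w ω = 1)
    (X : Ω → ℝ) (M : ℝ) (hM : 0 < M)
    (hX0 : ∀ ω, 0 ≤ X ω) (hXM : ∀ ω, X ω ≤ M) :
    (∑ ω, w ω * Real.exp (-X ω) ^ 2) / (∑ ω, w ω * Real.exp (-X ω)) ^ 2 - 1
        ≤ (Real.exp (2 * M) - 2 * M - 1) / M ^ 2 *
          ((∑ ω, w ω * X ω ^ 2) - (∑ ω, w ω * X ω) ^ 2) ∧
      (∑ ω, w ω * Real.exp (-X ω) ^ 2) / (∑ ω, w ω * Real.exp (-X ω)) ^ 2 - 1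
        ≤ Real.exp (2 * M) / M ^ 2 * ∑ ω, w ω * X ω ^ 2 := by
  set μ := ∑ ω, w ω * X ω with hμ
  set S1 := ∑ ω, w ω * Real.exp (-X ω) with hS1
  set A := ∑ ω, w ω * Real.exp (-X ω) ^ 2 with hAdef
  set Q := ∑ ω, w ω * X ω ^ 2 with hQ
  have hμ0 : 0 ≤ μ := Finset.sum_nonneg fun ω _ => mul_nonneg (hw0 ω) (hX0 ω)
  have hμM : μ ≤ M := by
    calc μ ≤ ∑ ω, w ω * M :=
          Finset.sum_le_sum fun ω _ => mul_le_mul_of_nonneg_left (hXM ω) (hw0 ω)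
      _ = M := by rw [← Finset.sum_mul, hw1, one_mul]
  -- Jensen: exp(-μ) ≤ S1
  have hJensen : Real.exp (-μ) ≤ S1 := by
    have := convexOn_exp.map_sum_le (t := Finset.univ) (w := w) (p := fun ω => -X ω)
      (fun ω _ => hw0 ω) hw1 (fun ω _ => Set.mem_univ _)
    simp only [smul_eq_mul] at this
    have h1 : ∑ ω, w ω * (-X ω) = -μ := by
      rw [hμ, ← Finset.sum_neg_distrib]
      exact Finset.sum_congr rfl fun ω _ => by ring
    rwa [h1] at this
  have hS1pos : 0 < S1 := lt_of_lt_of_le (Real.exp_pos _) hJensen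
  have hA0 : 0 ≤ A := Finset.sum_nonneg fun ω _ => mul_nonneg (hw0 ω) (by positivity)
  have hQ0 : 0 ≤ Q := Finset.sum_nonneg fun ω _ => mul_nonneg (hw0 ω) (sq_nonneg _)
  -- Cauchy-Schwarz: μ^2 ≤ Q
  have hVar : μ ^ 2 ≤ Q :=
    Real.pow_arith_mean_le_arith_mean_pow Finset.univ w X (fun ω _ => hw0 ω) hw1
      (fun ω _ => hX0 ω) 2
  set C : ℝ := (Real.exp (2 * M) - 2 * M - 1) / (2 * M) ^ 2 with hC
  -- main chain
  have main : A / S1 ^ 2 ≤ 1 + 4 * C * (Q - μ ^ 2) := by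
    have step1 : A / S1 ^ 2 ≤ A * Real.exp μ ^ 2 := by
      have h1 : Real.exp (-μ) ^ 2 ≤ S1 ^ 2 :=
        pow_le_pow_left₀ (Real.exp_pos _).le hJensen 2
      have h2 : A / S1 ^ 2 ≤ A / Real.exp (-μ) ^ 2 :=
        div_le_div_of_nonneg_left hA0 (by positivity) h1
      have h3 : A / Real.exp (-μ) ^ 2 = A * Real.exp μ ^ 2 := by
        rw [Real.exp_neg]
        field_simp
      linarith
    have step2 : A * Real.exp μ ^ 2 = ∑ ω, w ω * Real.exp (2 * μ - 2 * X ω) := by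
      rw [hAdef, Finset.sum_mul]
      refine Finset.sum_congr rfl fun ω _ => ?_
      rw [mul_assoc]
      congr 1
      rw [sq, sq, ← Real.exp_add, ← Real.exp_add, ← Real.exp_add]
      congr 1
      ring
    have step3 : ∑ ω, w ω * Real.exp (2 * μ - 2 * X ω)
        ≤ ∑ ω, w ω * (1 + (2 * μ - 2 * X ω) + C * (2 * μ - 2 * X ω) ^ 2) := by
      refine Finset.sum_le_sum fun ω _ => mul_le_mul_of_nonneg_left ?_ (hw0 ω)
      exact my_key (by linarith) (by nlinarith [hX0 ω, hμM])
    have step4 : ∑ ω, w ω * (1 + (2 * μ - 2 * X ω) + C * (2 * μ - 2 * X ω) ^ 2)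
        = (1 + 2 * μ + C * 4 * μ ^ 2) * (∑ ω, w ω)
          - (2 + C * 8 * μ) * μ + C * 4 * Q := by
      have hpt : ∀ ω, w ω * (1 + (2 * μ - 2 * X ω) + C * (2 * μ - 2 * X ω) ^ 2)
          = (1 + 2 * μ + C * 4 * μ ^ 2) * w ω - (2 + C * 8 * μ) * (w ω * X ω)
            + C * 4 * (w ω * X ω ^ 2) := fun ω => by ring
      rw [Finset.sum_congr rfl (fun ω _ => hpt ω), Finset.sum_add_distrib,
        Finset.sum_sub_distrib, ← Finset.mul_sum, ← Finset.mul_sum, ← Finset.mul_sum,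
        ← hμ, ← hQ, hw1, mul_one]
    rw [step2] at step1
    rw [step4] at step3
    have : (1 + 2 * μ + C * 4 * μ ^ 2) * (∑ ω, w ω) - (2 + C * 8 * μ) * μ + C * 4 * Q
        = 1 + 4 * C * (Q - μ ^ 2) := by rw [hw1]; ring
    linarith [this ▸ step3]
  have hCeq : 4 * C = (Real.exp (2 * M) - 2 * M - 1) / M ^ 2 := by
    rw [hC]
    field_simp
    ring
  have first : A / S1 ^ 2 - 1
      ≤ (Real.exp (2 * M) - 2 * M - 1) / M ^ 2 * (Q - μ ^ 2) := by
    rw [← hCeq]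
    linarith
  refine ⟨first, ?_⟩
  have hC0 : 0 ≤ (Real.exp (2 * M) - 2 * M - 1) / M ^ 2 := by
    have h := Real.add_one_le_exp (2 * M)
    apply div_nonneg (by linarith) (by positivity)
  have hCle : (Real.exp (2 * M) - 2 * M - 1) / M ^ 2 ≤ Real.exp (2 * M) / M ^ 2 := by
    apply div_le_div_of_nonneg_right ?_ (by positivity)
    linarith
  calc A / S1 ^ 2 - 1 ≤ (Real.exp (2 * M) - 2 * M - 1) / M ^ 2 * (Q - μ ^ 2) := first
    _ ≤ (Real.exp (2 * M) - 2 * M - 1) / M ^ 2 * Q := by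
        exact mul_le_mul_of_nonneg_left (by nlinarith [sq_nonneg μ]) hC0
    _ ≤ Real.exp (2 * M) / M ^ 2 * Q := mul_le_mul_of_nonneg_right hCle hQ0
end

section
/- In a two-player zero-sum game, let (π̄₁, π̄₂) be a Nash equilibrium of the regularized game with utilities 𝒰ᵢ(π₁,π₂) = uᵢ(π₁,π₂) - λᵢ·KL(πᵢ‖τᵢ). Then (π̄₁, π̄₂) is an ε-approximate Nash equilibrium of the original game with utilities uᵢ, where ε = max{λ₁β₁, λ₂β₂} and βᵢ = max_{a∈Aᵢ} log(1/τᵢ(a)). -/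
/-!
Against the regularized best response `π̄ᵢ`, any deviation `π` gains at most
`λᵢ (KL(π‖τᵢ) - KL(π̄ᵢ‖τᵢ))` in the original utility. Gibbs' inequality gives
`KL(π̄ᵢ‖τᵢ) ≥ 0`, and since `π log π ≤ 0` on `[0, 1]` we get
`KL(π‖τᵢ) ≤ Σ π(a) log (1 / τᵢ(a)) ≤ βᵢ`.
-/

open Real Finset

lemma sub_le_mul_log_div {p τ : ℝ} (hp : 0 ≤ p) (hτ : 0 < τ) :
    p - τ ≤ p * log (p / τ) := by
  have h := mul_le_mul_of_nonneg_left (self_sub_one_le_mul_log (div_nonneg hp hτ.le)) hτ.le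
  field_simp at h
  linarith

lemma mul_log_div_le_mul_log_one_div {p τ : ℝ} (hp0 : 0 ≤ p) (hp1 : p ≤ 1) (hτ : 0 < τ) :
    p * log (p / τ) ≤ p * log (1 / τ) := by
  rcases hp0.eq_or_lt with rfl | hp
  · simp
  · have hsplit : log (p / τ) = log p + log (1 / τ) := by
      rw [div_eq_mul_one_div p τ, log_mul hp.ne' (one_div_pos.2 hτ).ne']
    rw [hsplit, mul_add]
    linarith [mul_log_nonpos hp0 hp1]

section Simplex

variable {A : Type*} [Fintype A] {τ p : A → ℝ}

lemma sum_mul_log_div_nonneg (hτ : ∀ a, 0 < τ a) (hp : ∀ a, 0 ≤ p a)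
    (hsum : ∑ a, p a = ∑ a, τ a) : 0 ≤ ∑ a, p a * log (p a / τ a) :=
  calc (0 : ℝ) = ∑ a, (p a - τ a) := by rw [sum_sub_distrib, hsum, sub_self]
    _ ≤ _ := sum_le_sum fun a _ => sub_le_mul_log_div (hp a) (hτ a)

lemma sum_mul_log_div_le {β : ℝ} (hτ : ∀ a, 0 < τ a) (hβ : ∀ a, log (1 / τ a) ≤ β)
    (hp0 : ∀ a, 0 ≤ p a) (hp1 : ∑ a, p a = 1) : ∑ a, p a * log (p a / τ a) ≤ β := by
  have hp_le_one : ∀ a, p a ≤ 1 := fun a =>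
    hp1 ▸ single_le_sum (fun i _ => hp0 i) (mem_univ a)
  calc ∑ a, p a * log (p a / τ a) ≤ ∑ a, p a * log (1 / τ a) :=
        sum_le_sum fun a _ => mul_log_div_le_mul_log_one_div (hp0 a) (hp_le_one a) (hτ a)
    _ ≤ ∑ a, p a * β := sum_le_sum fun a _ => mul_le_mul_of_nonneg_left (hβ a) (hp0 a)
    _ = β := by rw [← sum_mul, hp1, one_mul]

lemma sub_le_mul_of_regularized_best_response {β lam : ℝ} (hτ0 : ∀ a, 0 < τ a)
    (hτ1 : ∑ a, τ a = 1) (hβ : ∀ a, log (1 / τ a) ≤ β) (hlam : 0 ≤ lam)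
    (u : (A → ℝ) → ℝ) {pbar : A → ℝ}
    (hpbar0 : ∀ a, 0 ≤ pbar a) (hpbar1 : ∑ a, pbar a = 1)
    (hbest : ∀ p : A → ℝ, (∀ a, 0 ≤ p a) → ∑ a, p a = 1 →
      u p - lam * ∑ a, p a * log (p a / τ a)
        ≤ u pbar - lam * ∑ a, pbar a * log (pbar a / τ a))
    (hp0 : ∀ a, 0 ≤ p a) (hp1 : ∑ a, p a = 1) :
    u p - u pbar ≤ lam * β := by
  have hKL_pbar := sum_mul_log_div_nonneg hτ0 hpbar0 (hpbar1.trans hτ1.symm)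
  have hKL_p := sum_mul_log_div_le hτ0 hβ hp0 hp1
  linarith [hbest p hp0 hp1, mul_le_mul_of_nonneg_left hKL_p hlam, mul_nonneg hlam hKL_pbar]

end Simplex

theorem stmt7 {A₁ A₂ : Type*} [Fintype A₁] [Fintype A₂] [Nonempty A₁] [Nonempty A₂]
    (G : A₁ → A₂ → ℝ)
    (τ₁ : A₁ → ℝ) (τ₂ : A₂ → ℝ)
    (hτ₁0 : ∀ a, 0 < τ₁ a) (hτ₂0 : ∀ b, 0 < τ₂ b)
    (hτ₁1 : ∑ a, τ₁ a = 1) (hτ₂1 : ∑ b, τ₂ b = 1)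
    (lam₁ lam₂ : ℝ) (hl₁ : 0 ≤ lam₁) (hl₂ : 0 ≤ lam₂)
    (β₁ β₂ : ℝ)
    (hβ₁ : β₁ = Finset.univ.sup' Finset.univ_nonempty (fun a => Real.log (1 / τ₁ a)))
    (hβ₂ : β₂ = Finset.univ.sup' Finset.univ_nonempty (fun b => Real.log (1 / τ₂ b)))
    (pbar : A₁ → ℝ) (qbar : A₂ → ℝ)
    (hp0 : ∀ a, 0 ≤ pbar a) (hp1 : ∑ a, pbar a = 1)
    (hq0 : ∀ b, 0 ≤ qbar b) (hq1 : ∑ b, qbar b = 1)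
    (hNash₁ : ∀ p : A₁ → ℝ, (∀ a, 0 ≤ p a) → ∑ a, p a = 1 →
      (∑ a, ∑ b, p a * qbar b * G a b) - lam₁ * ∑ a, p a * Real.log (p a / τ₁ a)
        ≤ (∑ a, ∑ b, pbar a * qbar b * G a b)
            - lam₁ * ∑ a, pbar a * Real.log (pbar a / τ₁ a))
    (hNash₂ : ∀ q : A₂ → ℝ, (∀ b, 0 ≤ q b) → ∑ b, q b = 1 →
      (-(∑ a, ∑ b, pbar a * q b * G a b)) - lam₂ * ∑ b, q b * Real.log (q b / τ₂ b)
        ≤ (-(∑ a, ∑ b, pbar a * qbar b * G a b))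
            - lam₂ * ∑ b, qbar b * Real.log (qbar b / τ₂ b)) :
    (∀ p : A₁ → ℝ, (∀ a, 0 ≤ p a) → ∑ a, p a = 1 →
      (∑ a, ∑ b, p a * qbar b * G a b) - (∑ a, ∑ b, pbar a * qbar b * G a b)
        ≤ max (lam₁ * β₁) (lam₂ * β₂)) ∧
    (∀ q : A₂ → ℝ, (∀ b, 0 ≤ q b) → ∑ b, q b = 1 →
      (-(∑ a, ∑ b, pbar a * q b * G a b)) - (-(∑ a, ∑ b, pbar a * qbar b * G a b))
        ≤ max (lam₁ * β₁) (lam₂ * β₂)) := by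
  have hβ₁_ge : ∀ a, log (1 / τ₁ a) ≤ β₁ := fun a =>
    hβ₁ ▸ le_sup' (fun a => log (1 / τ₁ a)) (mem_univ a)
  have hβ₂_ge : ∀ b, log (1 / τ₂ b) ≤ β₂ := fun b =>
    hβ₂ ▸ le_sup' (fun b => log (1 / τ₂ b)) (mem_univ b)
  refine ⟨fun p hp0' hp1' => (le_max_left _ _).trans' ?_,
    fun q hq0' hq1' => (le_max_right _ _).trans' ?_⟩
  · exact sub_le_mul_of_regularized_best_response hτ₁0 hτ₁1 hβ₁_ge hl₁
      (fun p => ∑ a, ∑ b, p a * qbar b * G a b) hp0 hp1 hNash₁ hp0' hp1'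
  · exact sub_le_mul_of_regularized_best_response hτ₂0 hτ₂1 hβ₂_ge hl₂
      (fun q => -∑ a, ∑ b, pbar a * q b * G a b) hq0 hq1 hNash₂ hq0' hq1'
end

section
/- The piKL-Hedge iterate π^{t+1}_i(a) ∝ exp{ (η·CV^t_i(a) + tλᵢη·log τᵢ(a)) / (1 + tλᵢη) } coincides with the FTRL iterate for the regularized utilities 𝒰^t_i(π) = u_i(π, a^t_{-i}) - λᵢ·KL(π‖τᵢ) with negative-entropy regularizer: i.e., π^{t+1}_i = argmax_{π∈Δ(A_i)} { Σ_{t'=1}^t 𝒰^{t'}_i(π) - (1/η)·Σ_a π(a) log π(a) }, where CV^t_i(a) = Σ_{t'=1}^t u_i(a, a^{t'}_{-i}). -/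
theorem stmt10 {A : Type*} [Fintype A] [Nonempty A]
    (τ : A → ℝ) (hτ0 : ∀ a, 0 < τ a) (hτ1 : ∑ a, τ a = 1)
    (lam η : ℝ) (hlam : 0 < lam) (hη : 0 < η)
    (t : ℕ) (u : ℕ → A → ℝ)
    (CV : A → ℝ) (hCV : ∀ a, CV a = ∑ s ∈ Finset.range t, u s a)
    (pn : A → ℝ)
    (hpn : ∀ a, pn a =
      Real.exp ((η * CV a + (t : ℝ) * lam * η * Real.log (τ a)) / (1 + (t : ℝ) * lam * η)) /
        ∑ a', Real.exp ((η * CV a' + (t : ℝ) * lam * η * Real.log (τ a')) / (1 + (t : ℝ) * lam * η))) :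
    (∀ a, 0 ≤ pn a) ∧ (∑ a, pn a = 1) ∧
    ∀ p : A → ℝ, (∀ a, 0 ≤ p a) → ∑ a, p a = 1 →
      (∑ s ∈ Finset.range t,
          ((∑ a, p a * u s a) - lam * ∑ a, p a * Real.log (p a / τ a)))
          - (1 / η) * ∑ a, p a * Real.log (p a)
        ≤ (∑ s ∈ Finset.range t,
          ((∑ a, pn a * u s a) - lam * ∑ a, pn a * Real.log (pn a / τ a)))
          - (1 / η) * ∑ a, pn a * Real.log (pn a) := by
  classical
  have hηne : η ≠ 0 := ne_of_gt hη
  have hden : (0:ℝ) < 1 + (t : ℝ) * lam * η := by positivity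
  set c : ℝ := (t : ℝ) * lam + 1 / η with hc
  have hcpos : 0 < c := by positivity
  have hcne : c ≠ 0 := ne_of_gt hcpos
  set w : A → ℝ := fun a => CV a + (t : ℝ) * lam * Real.log (τ a) with hw
  have hexp : ∀ a, (η * CV a + (t : ℝ) * lam * η * Real.log (τ a)) / (1 + (t : ℝ) * lam * η)
      = w a / c := by
    intro a
    rw [hw, hc]
    field_simp
    ring
  set Z : ℝ := ∑ a, Real.exp (w a / c) with hZ
  have hZpos : 0 < Z := Finset.sum_pos (fun a _ => Real.exp_pos _) Finset.univ_nonempty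
  have hpn' : ∀ a, pn a = Real.exp (w a / c) / Z := by
    intro a
    rw [hpn a]
    simp only [hexp]
    rfl
  have hpnpos : ∀ a, 0 < pn a := by
    intro a; rw [hpn' a]; positivity
  have hpnsum : ∑ a, pn a = 1 := by
    simp only [hpn']
    rw [← Finset.sum_div, ← hZ, div_self (ne_of_gt hZpos)]
  have hlogpn : ∀ a, Real.log (pn a) = w a / c - Real.log Z := by
    intro a
    rw [hpn' a, Real.log_div (Real.exp_ne_zero _) (ne_of_gt hZpos), Real.log_exp]
  -- rewrite the objective in terms of w and c
  have key : ∀ q : A → ℝ, (∀ a, 0 ≤ q a) → (∑ a, q a = 1) →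
      (∑ s ∈ Finset.range t, ((∑ a, q a * u s a) - lam * ∑ a, q a * Real.log (q a / τ a)))
        - (1 / η) * ∑ a, q a * Real.log (q a)
      = (∑ a, q a * w a) - c * ∑ a, q a * Real.log (q a) := by
    intro q hq hq1
    have h1 : ∑ s ∈ Finset.range t, (∑ a, q a * u s a) = ∑ a, q a * CV a := by
      rw [Finset.sum_comm]
      refine Finset.sum_congr rfl fun a _ => ?_
      rw [hCV, Finset.mul_sum]
    have h2 : ∀ a, q a * Real.log (q a / τ a) = q a * Real.log (q a) - q a * Real.log (τ a) := by
      intro a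
      rcases eq_or_lt_of_le (hq a) with h | h
      · simp [← h]
      · rw [Real.log_div (ne_of_gt h) (ne_of_gt (hτ0 a))]; ring
    have h3 : ∑ a, q a * Real.log (q a / τ a)
        = (∑ a, q a * Real.log (q a)) - ∑ a, q a * Real.log (τ a) := by
      rw [← Finset.sum_sub_distrib]
      exact Finset.sum_congr rfl fun a _ => h2 a
    have h4 : ∑ a, q a * w a = ∑ a, q a * CV a + (t : ℝ) * lam * ∑ a, q a * Real.log (τ a) := by
      rw [Finset.mul_sum, ← Finset.sum_add_distrib]
      refine Finset.sum_congr rfl fun a _ => ?_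
      simp only [hw]; ring
    rw [Finset.sum_sub_distrib, h1, h3, Finset.sum_const, Finset.card_range, h4, hc]
    ring
  -- value at pn
  have hobjpn : (∑ a, pn a * w a) - c * ∑ a, pn a * Real.log (pn a) = c * Real.log Z := by
    simp only [hlogpn]
    have h5 : ∑ a, pn a * (w a / c - Real.log Z)
        = (∑ a, pn a * w a) / c - Real.log Z * ∑ a, pn a := by
      rw [Finset.sum_div, Finset.mul_sum, ← Finset.sum_sub_distrib]
      exact Finset.sum_congr rfl fun a _ => by ring
    rw [h5, hpnsum]
    field_simp
    ring
  refine ⟨fun a => le_of_lt (hpnpos a), hpnsum, fun p hp hp1 => ?_⟩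
  rw [key p hp hp1, key pn (fun a => le_of_lt (hpnpos a)) hpnsum, hobjpn]
  -- Gibbs inequality
  have hgibbs : ∑ a, p a * (Real.log (pn a) - Real.log (p a)) ≤ 0 := by
    have hterm : ∀ a ∈ Finset.univ, p a * (Real.log (pn a) - Real.log (p a)) ≤ pn a - p a := by
      intro a _
      rcases eq_or_lt_of_le (hp a) with h | h
      · simp [← h]; exact le_of_lt (hpnpos a)
      · have hlog : Real.log (pn a / p a) ≤ pn a / p a - 1 :=
          Real.log_le_sub_one_of_pos (div_pos (hpnpos a) h)
        rw [Real.log_div (ne_of_gt (hpnpos a)) (ne_of_gt h)] at hlog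
        calc p a * (Real.log (pn a) - Real.log (p a)) ≤ p a * (pn a / p a - 1) :=
              mul_le_mul_of_nonneg_left hlog (le_of_lt h)
          _ = pn a - p a := by field_simp
    calc ∑ a, p a * (Real.log (pn a) - Real.log (p a)) ≤ ∑ a, (pn a - p a) :=
          Finset.sum_le_sum hterm
      _ = 0 := by rw [Finset.sum_sub_distrib, hpnsum, hp1, sub_self]
  have hwp : ∀ a, w a = c * (Real.log (pn a) + Real.log Z) := by
    intro a
    rw [hlogpn a]
    field_simp
    ring
  calc (∑ a, p a * w a) - c * ∑ a, p a * Real.log (p a)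
      = c * (∑ a, p a * (Real.log (pn a) - Real.log (p a))) + c * Real.log Z := by
        simp only [hwp]
        rw [Finset.mul_sum, Finset.mul_sum]
        have : ∑ a, p a * (c * (Real.log (pn a) + Real.log Z))
            = c * (∑ a, p a * Real.log (pn a)) + c * Real.log Z * ∑ a, p a := by
          rw [Finset.mul_sum, Finset.mul_sum, ← Finset.sum_add_distrib]
          exact Finset.sum_congr rfl fun a _ => by ring
        rw [this, hp1]
        rw [show ∑ a, c * (p a * (Real.log (pn a) - Real.log (p a)))
            = c * (∑ a, p a * Real.log (pn a)) - ∑ a, c * (p a * Real.log (p a)) by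
          rw [Finset.mul_sum, ← Finset.sum_sub_distrib]
          exact Finset.sum_congr rfl fun a _ => by ring]
        rw [Finset.mul_sum]
        ring
    _ ≤ c * 0 + c * Real.log Z := by
        have := mul_le_mul_of_nonneg_left hgibbs (le_of_lt hcpos)
        linarith
    _ = c * Real.log Z := by ring
end

section
/- For the piKL-Hedge weight vectors v^t(a) = (η/(1+(t-1)λη))·((t-1)λ·log τ(a) + Σ_{t'=1}^{t-1} ũ(a, a^{t'}_{-i})) with shifted utilities ũ ∈ [0, D], the per-step increment ξ^t(a) := v^{t+1}(a) - v^t(a) satisfies max_{a,a'∈A} (ξ^t(a) - ξ^t(a')) ≤ η·(λβ + 2D), where β = max_a log(1/τ(a)). -/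
set_option maxHeartbeats 1000000 in
theorem stmt12 {A : Type*} [Fintype A] [Nonempty A]
    (τ : A → ℝ) (hτ0 : ∀ a, 0 < τ a) (hτ1 : ∑ a, τ a = 1)
    (lam η D : ℝ) (hlam : 0 < lam) (hη : 0 < η) (hD : 0 < D)
    (u : ℕ → A → ℝ) (hu0 : ∀ s a, 0 ≤ u s a) (huD : ∀ s a, u s a ≤ D)
    (β : ℝ)
    (hβ : β = Finset.univ.sup' Finset.univ_nonempty (fun a => Real.log (1 / τ a)))
    (V : ℕ → A → ℝ)
    (hV : ∀ s a, V s a = (η / (1 + (s : ℝ) * lam * η)) *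
      ((s : ℝ) * lam * Real.log (τ a) + ∑ i ∈ Finset.range s, u i a))
    (t : ℕ) :
    ∀ a a' : A,
      (V (t + 1) a - V t a) - (V (t + 1) a' - V t a') ≤ η * (lam * β + 2 * D) := by
  intro a a'
  set T : ℝ := (t : ℝ) with hT
  have hT0 : 0 ≤ T := Nat.cast_nonneg t
  have hp : (0:ℝ) < 1 + T * lam * η := by positivity
  have hq : (0:ℝ) < 1 + (T + 1) * lam * η := by positivity
  have hp1 : (1:ℝ) ≤ 1 + T * lam * η := by
    have : 0 ≤ T * lam * η := by positivity
    linarith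
  have hq1 : (1:ℝ) ≤ 1 + (T + 1) * lam * η := by
    have : 0 ≤ (T + 1) * lam * η := by positivity
    linarith
  -- τ a ≤ 1 for all a
  have hτ1' : ∀ b : A, τ b ≤ 1 := by
    intro b
    have : ∑ c, τ c ≥ τ b := Finset.single_le_sum (fun c _ => (hτ0 c).le) (Finset.mem_univ b)
    linarith [hτ1 ▸ this]
  have hLa : Real.log (τ a) ≤ 0 := Real.log_nonpos (hτ0 a).le (hτ1' a)
  have hβa' : -Real.log (τ a') ≤ β := by
    have h := Finset.le_sup' (fun b => Real.log (1 / τ b)) (Finset.mem_univ a')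
    rw [← hβ] at h
    simpa [one_div, Real.log_inv] using h
  have hβ0 : 0 ≤ β := by
    have h := Finset.le_sup' (fun b => Real.log (1 / τ b)) (Finset.mem_univ a)
    rw [← hβ] at h
    have : 0 ≤ Real.log (1 / τ a) := by
      rw [one_div, Real.log_inv]; linarith
    linarith
  have hSa : 0 ≤ ∑ i ∈ Finset.range t, u i a :=
    Finset.sum_nonneg fun i _ => hu0 i a
  have hSa' : ∑ i ∈ Finset.range t, u i a' ≤ T * D := by
    calc ∑ i ∈ Finset.range t, u i a' ≤ ∑ _i ∈ Finset.range t, D :=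
          Finset.sum_le_sum fun i _ => huD i a'
      _ = T * D := by simp [mul_comm, hT]
  set La := Real.log (τ a)
  set La' := Real.log (τ a')
  set Sa := ∑ i ∈ Finset.range t, u i a
  set Sa' := ∑ i ∈ Finset.range t, u i a'
  have hcast : ((t + 1 : ℕ) : ℝ) = T + 1 := by push_cast [hT]; ring
  have hE : (V (t + 1) a - V t a) - (V (t + 1) a' - V t a')
      = (η * lam * (La - La') + lam * η ^ 2 * (Sa' - Sa)
          + η * (1 + T * lam * η) * (u t a - u t a'))
        / ((1 + T * lam * η) * (1 + (T + 1) * lam * η)) := by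
    rw [hV (t+1) a, hV t a, hV (t+1) a', hV t a', hcast,
      Finset.sum_range_succ, Finset.sum_range_succ]
    field_simp
    ring
  rw [hE, div_le_iff₀ (by positivity)]
  have h1 : η * lam * (La - La') ≤ η * lam * β := by
    have : La - La' ≤ β := by linarith
    nlinarith
  have h2 : lam * η ^ 2 * (Sa' - Sa) ≤ η * D * (1 + T * lam * η) := by
    have hc : 0 ≤ lam * η ^ 2 := by positivity
    nlinarith [mul_nonneg hc (by linarith : (0:ℝ) ≤ T * D - Sa'),
      mul_nonneg hc hSa, mul_pos hη hD]
  have h3 : η * (1 + T * lam * η) * (u t a - u t a') ≤ η * D * (1 + T * lam * η) := by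
    have h4 : u t a - u t a' ≤ D := by linarith [huD t a, hu0 t a']
    have hc : 0 ≤ η * (1 + T * lam * η) := by positivity
    nlinarith [mul_nonneg hc (by linarith : (0:ℝ) ≤ D - (u t a - u t a'))]
  have hpq1 : (1:ℝ) ≤ (1 + T * lam * η) * (1 + (T + 1) * lam * η) := by
    nlinarith [mul_le_mul hp1 hq1 (by linarith) (by linarith)]
  have h5 : η * lam * β ≤ η * lam * β * ((1 + T * lam * η) * (1 + (T + 1) * lam * η)) := by
    have hc : 0 ≤ η * lam * β := by positivity
    exact le_mul_of_one_le_right hc hpq1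
  have h6 : η * D * (1 + T * lam * η)
      ≤ η * D * ((1 + T * lam * η) * (1 + (T + 1) * lam * η)) := by
    have hc : 0 ≤ η * D * (1 + T * lam * η) := by positivity
    calc η * D * (1 + T * lam * η)
        ≤ η * D * (1 + T * lam * η) * (1 + (T + 1) * lam * η) :=
          le_mul_of_one_le_right hc hq1
      _ = η * D * ((1 + T * lam * η) * (1 + (T + 1) * lam * η)) := by ring
  have hrhs : η * (lam * β + 2 * D) * ((1 + T * lam * η) * (1 + (T + 1) * lam * η))
      = η * lam * β * ((1 + T * lam * η) * (1 + (T + 1) * lam * η))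
        + 2 * (η * D * ((1 + T * lam * η) * (1 + (T + 1) * lam * η))) := by ring
  linarith
end
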